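/- arXiv:cs/0511025 — 2 statements merged into one kernel-verified Lean document; each statement's English description precedes it below -/
import Mathlib

section
/- The alpha-equivalence relation ≈ on nominal terms is equivariant: if t ≈ u then swap a b t ≈ swap a b u for all names a, b. -/
inductive Term (A C F : Type) : Type where
  | name : A → Term A C F
  | const : C → Term A C F
  | fn : F → List (Term A C F) → Term A C F
  | abs : A → Term A C F → Term A C F

variable {A C F : Type} [DecidableEq A]

def swapName (a b c : A) : A := if c = a then b else if c = b then a else c

def Term.swap (a b : A) : Term A C F → Term A C F
  | .name c => .name (swapName a b c)
  | .const c => .const c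
  | .fn f ts => .fn f (ts.attach.map (fun x => Term.swap a b x.1))
  | .abs c t => .abs (swapName a b c) (Term.swap a b t)
termination_by t => sizeOf t
decreasing_by all_goals (simp_wf; try omega)
              · have := List.sizeOf_lt_of_mem x.2; omega

inductive Term.Fresh : A → Term A C F → Prop where
  | name {a b : A} : a ≠ b → Term.Fresh a (.name b)
  | const {a : A} {c : C} : Term.Fresh a (.const c)
  | fn {a : A} {f : F} {ts : List (Term A C F)} :
      (∀ t ∈ ts, Term.Fresh a t) → Term.Fresh a (.fn f ts)
  | abs_neq {a b : A} {t : Term A C F} :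
      a ≠ b → Term.Fresh a t → Term.Fresh a (.abs b t)
  | abs_same {a : A} {t : Term A C F} : Term.Fresh a (.abs a t)

inductive Term.Aeq : Term A C F → Term A C F → Prop where
  | name {a : A} : Term.Aeq (.name a) (.name a)
  | const {c : C} : Term.Aeq (.const c) (.const c)
  | fn {f : F} {ts us : List (Term A C F)} :
      List.Forall₂ Term.Aeq ts us → Term.Aeq (.fn f ts) (.fn f us)
  | abs_same {a : A} {t u : Term A C F} :
      Term.Aeq t u → Term.Aeq (.abs a t) (.abs a u)
  | abs_diff {a b : A} {t u : Term A C F} :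
      Term.Fresh a u → Term.Aeq t (u.swap a b) → Term.Aeq (.abs a t) (.abs b u)

@[simp] theorem Term.swap_name (a b x : A) :
    (Term.name x : Term A C F).swap a b = .name (swapName a b x) := by rw [Term.swap]

@[simp] theorem Term.swap_const (a b : A) (c : C) :
    (Term.const c : Term A C F).swap a b = .const c := by rw [Term.swap]

@[simp] theorem Term.swap_abs (a b x : A) (t : Term A C F) :
    (Term.abs x t).swap a b = .abs (swapName a b x) (t.swap a b) := by rw [Term.swap]

@[simp] theorem Term.swap_fn (a b : A) (f : F) (ts : List (Term A C F)) :
    (Term.fn f ts).swap a b = .fn f (ts.map (Term.swap a b)) := by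
  rw [Term.swap]
  simp

theorem swapName_eq_swap (a b c : A) : swapName a b c = Equiv.swap a b c := by
  simp [swapName, Equiv.swap_apply_def]

theorem swapName_conj (a b c d x : A) :
    swapName (swapName a b c) (swapName a b d) (swapName a b x) =
    swapName a b (swapName c d x) := by
  simp [swapName_eq_swap, Equiv.swap_apply_apply, Equiv.Perm.mul_apply]

theorem swapName_ne {c d : A} (a b : A) (h : c ≠ d) :
    swapName a b c ≠ swapName a b d := by
  simp only [swapName_eq_swap]
  exact fun he => h ((Equiv.swap a b).injective he)

theorem Term.swap_conj (a b c d : A) (t : Term A C F) :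
    (t.swap a b).swap (swapName a b c) (swapName a b d) =
    (t.swap c d).swap a b := by
  induction t using Term.rec (motive_2 := fun ts =>
      (ts.map (Term.swap a b)).map (Term.swap (swapName a b c) (swapName a b d)) =
      (ts.map (Term.swap c d)).map (Term.swap a b)) with
  | name x => simp [swapName_conj]
  | const x => simp
  | fn f ts ih => simpa using ih
  | abs x t ih => simp [swapName_conj, ih]
  | nil => simp
  | cons t ts iht ihts => simp_all

theorem Term.Fresh.swap {c : A} {t : Term A C F} (h : Term.Fresh c t) (a b : A) :
    Term.Fresh (swapName a b c) (t.swap a b) := by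
  induction h with
  | name hne => rw [Term.swap_name]; exact .name (swapName_ne a b hne)
  | const => rw [Term.swap_const]; exact .const
  | fn _ ih =>
      rw [Term.swap_fn]
      exact .fn (by simpa using ih)
  | abs_neq hne _ ih =>
      rw [Term.swap_abs]; exact .abs_neq (swapName_ne a b hne) ih
  | abs_same => rw [Term.swap_abs]; exact .abs_same

theorem aeq_equivariant {t u : Term A C F} (h : t.Aeq u) (a b : A) :
    (t.swap a b).Aeq (u.swap a b) := by
  induction h using Term.Aeq.rec (motive_2 := fun ts us _ =>
      List.Forall₂ Term.Aeq (ts.map (Term.swap a b)) (us.map (Term.swap a b))) with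
  | name => simp only [Term.swap_name]; exact .name
  | const => simp only [Term.swap_const]; exact .const
  | fn _ ih => simp only [Term.swap_fn]; exact .fn ih
  | abs_same _ ih => simp only [Term.swap_abs]; exact .abs_same ih
  | abs_diff hf _ ih =>
      simp only [Term.swap_abs]
      exact .abs_diff (hf.swap a b) (by rw [Term.swap_conj]; exact ih)
  | nil => exact .nil
  | cons _ _ iht ihts => exact .cons iht ihts
end

section
/- The relational definition of substitution is total and functional: for every lambda-term M, term N, and name a, there exists a unique (up to alpha-equivalence) M' such that subst(M, N, a, M') holds. -/
inductive Lam (A : Type) : Type where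
  | var : A → Lam A
  | app : Lam A → Lam A → Lam A
  | lam : A → Lam A → Lam A

variable {A : Type} [DecidableEq A]

def Lam.swap (a b : A) : Lam A → Lam A
  | .var c => .var (swapName a b c)
  | .app M N => .app (M.swap a b) (N.swap a b)
  | .lam c M => .lam (swapName a b c) (M.swap a b)

lemma swapName_self (a c : A) : swapName a a c = c := by
  unfold swapName; split_ifs <;> simp_all

lemma swapName_invol (a b c : A) : swapName a b (swapName a b c) = c := by
  unfold swapName; split_ifs <;> simp_all

lemma swapName_comm (a b c : A) : swapName a b c = swapName b a c := by
  unfold swapName; split_ifs <;> simp_all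

lemma swapName_swapName (a b c d x : A) :
    swapName a b (swapName c d x)
      = swapName (swapName a b c) (swapName a b d) (swapName a b x) := by
  unfold swapName; split_ifs <;> simp_all

lemma Lam.swap_self (a : A) (M : Lam A) : M.swap a a = M := by
  induction M <;> simp_all [Lam.swap, swapName_self]

lemma Lam.swap_invol (a b : A) (M : Lam A) : (M.swap a b).swap a b = M := by
  induction M <;> simp_all [Lam.swap, swapName_invol]

lemma Lam.swap_comm (a b : A) (M : Lam A) : M.swap a b = M.swap b a := by
  induction M <;> simp_all [Lam.swap]; all_goals exact swapName_comm a b _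

lemma Lam.swap_swap (a b c d : A) (M : Lam A) :
    (M.swap c d).swap a b
      = ((M.swap a b).swap (swapName a b c) (swapName a b d)) := by
  induction M <;> simp_all [Lam.swap]; all_goals rw [← swapName_swapName]
def Lam.size : Lam A → ℕ
  | .var _ => 1
  | .app M N => M.size + N.size + 1
  | .lam _ M => M.size + 1

lemma Lam.size_swap (a b : A) (M : Lam A) : (M.swap a b).size = M.size := by
  induction M <;> simp_all [Lam.swap, Lam.size]

lemma swapName_inj {a b x y : A} (h : swapName a b x = swapName a b y) : x = y := by
  have := congrArg (swapName a b) h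
  simpa [swapName_invol] using this

inductive Lam.Fresh : A → Lam A → Prop where
  | var {a b : A} : a ≠ b → Lam.Fresh a (.var b)
  | app {a : A} {M N : Lam A} :
      Lam.Fresh a M → Lam.Fresh a N → Lam.Fresh a (.app M N)
  | lam_neq {a b : A} {M : Lam A} :
      a ≠ b → Lam.Fresh a M → Lam.Fresh a (.lam b M)
  | lam_same {a : A} {M : Lam A} : Lam.Fresh a (.lam a M)

inductive Lam.Aeq : Lam A → Lam A → Prop where
  | var {a : A} : Lam.Aeq (.var a) (.var a)
  | app {M M' N N' : Lam A} :
      Lam.Aeq M M' → Lam.Aeq N N' → Lam.Aeq (.app M N) (.app M' N')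
  | lam_same {a : A} {M N : Lam A} :
      Lam.Aeq M N → Lam.Aeq (.lam a M) (.lam a N)
  | lam_diff {a b : A} {M N : Lam A} :
      Lam.Fresh a N → Lam.Aeq M (N.swap a b) → Lam.Aeq (.lam a M) (.lam b N)

lemma Lam.Fresh.swap {x a b : A} {M : Lam A} (h : M.Fresh x) :
    (M.swap a b).Fresh (swapName a b x) := by
  induction h with
  | var hne => exact .var fun h => hne (swapName_inj h)
  | app _ _ ih1 ih2 => exact .app ih1 ih2
  | lam_neq hne _ ih => exact .lam_neq (fun h => hne (swapName_inj h)) ih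
  | lam_same => exact .lam_same

lemma Lam.fresh_swap_iff {x a b : A} {M : Lam A} :
    (M.swap a b).Fresh x ↔ M.Fresh (swapName a b x) := by
  constructor
  · intro h
    have := h.swap (a := a) (b := b)
    rwa [Lam.swap_invol] at this
  · intro h
    have := h.swap (a := a) (b := b)
    rwa [swapName_invol] at this

lemma Lam.Aeq.refl (M : Lam A) : M.Aeq M := by
  induction M with
  | var a => exact .var
  | app M N ih1 ih2 => exact .app ih1 ih2
  | lam a M ih => exact .lam_same ih

lemma Lam.Aeq.swap {M N : Lam A} (h : M.Aeq N) (a b : A) :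
    (M.swap a b).Aeq (N.swap a b) := by
  induction h with
  | var => exact .var
  | app _ _ ih1 ih2 => exact .app ih1 ih2
  | lam_same _ ih => exact .lam_same ih
  | @lam_diff c d M' N' hf _ ih =>
      refine .lam_diff (hf.swap) ?_
      rwa [Lam.swap_swap a b c d N'] at ih

lemma Lam.Aeq.fresh_iff {M N : Lam A} (h : M.Aeq N) :
    ∀ x, (M.Fresh x ↔ N.Fresh x) := by
  induction h with
  | var => intro x; rfl
  | app _ _ ih1 ih2 =>
      intro x
      constructor
      · rintro ⟨⟩; exact .app ((ih1 _).mp ‹_›) ((ih2 _).mp ‹_›)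
      · rintro ⟨⟩; exact .app ((ih1 _).mpr ‹_›) ((ih2 _).mpr ‹_›)
  | @lam_same c M' N' _ ih =>
      intro x
      constructor
      · intro h
        rcases h with _ | _ | ⟨hne, h⟩ | _
        · exact .lam_neq hne ((ih _).mp h)
        · exact .lam_same
      · intro h
        rcases h with _ | _ | ⟨hne, h⟩ | _
        · exact .lam_neq hne ((ih _).mpr h)
        · exact .lam_same
  | @lam_diff c d M' N' hf _ ih =>
      intro x
      have ih' : ∀ y, M'.Fresh y ↔ N'.Fresh (swapName c d y) := by
        intro y
        rw [ih y, Lam.fresh_swap_iff]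
      constructor
      · intro h
        rcases h with _ | _ | ⟨hne, h⟩ | _
        · -- x ≠ c, Fresh x M'
          have hx : N'.Fresh (swapName c d x) := (ih' x).mp h
          by_cases hxd : x = d
          · subst hxd; exact .lam_same
          · refine .lam_neq hxd ?_
            by_cases hxc : x = c
            · exact absurd hxc hne
            · simpa [swapName, hxc, hxd] using hx
        · -- x = c
          by_cases hcd : c = d
          · exact hcd ▸ .lam_same
          · exact .lam_neq hcd hf
      · intro h
        rcases h with _ | _ | ⟨hne, h⟩ | _
        · -- x ≠ d, Fresh x N'
          by_cases hxc : x = c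
          · exact hxc ▸ .lam_same
          · refine .lam_neq hxc ?_
            refine (ih' x).mpr ?_
            simpa [swapName, hxc, hne] using h
        · -- x = d
          by_cases hdc : d = c
          · exact hdc ▸ .lam_same
          · refine .lam_neq hdc ?_
            refine (ih' d).mpr ?_
            simpa [swapName, hdc] using hf
lemma Lam.aeq_swap_of_fresh {x y : A} {M : Lam A}
    (hx : M.Fresh x) (hy : M.Fresh y) : (M.swap x y).Aeq M := by
  by_cases hxy : x = y
  · subst hxy; rw [Lam.swap_self]; exact .refl M
  induction M with
  | var c =>
      rcases hx with ⟨hx⟩; rcases hy with ⟨hy⟩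
      simp only [Lam.swap, swapName, if_neg (Ne.symm hx), if_neg (Ne.symm hy)]
      exact .var
  | app M N ih1 ih2 =>
      rcases hx with _ | ⟨hx1, hx2⟩; rcases hy with _ | ⟨hy1, hy2⟩
      exact .app (ih1 hx1 hy1) (ih2 hx2 hy2)
  | lam d Q ih =>
      by_cases hdx : d = x
      · subst hdx
        -- binder is x; y ≠ x so Fresh y Q
        have hyQ : Q.Fresh y := by
          rcases hy with _ | _ | ⟨_, h⟩ | _
          · exact h
          · exact absurd rfl hxy
        simp only [Lam.swap, swapName, if_pos rfl]
        exact .lam_diff hyQ (by rw [Lam.swap_comm]; exact .refl _)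
      by_cases hdy : d = y
      · subst hdy
        have hxQ : Q.Fresh x := by
          rcases hx with _ | _ | ⟨_, h⟩ | _
          · exact h
          · exact absurd rfl (Ne.symm hxy)
        simp only [Lam.swap, swapName, if_neg (by exact fun h => hdx h), if_pos rfl]
        exact .lam_diff hxQ (.refl _)
      · have hxQ : Q.Fresh x := by
          rcases hx with _ | _ | ⟨_, h⟩ | _
          · exact h
          · exact absurd rfl (Ne.symm hdx)
        have hyQ : Q.Fresh y := by
          rcases hy with _ | _ | ⟨_, h⟩ | _
          · exact h
          · exact absurd rfl (Ne.symm hdy)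
        simp only [Lam.swap, swapName, if_neg hdx, if_neg hdy]
        exact .lam_same (ih hxQ hyQ)

lemma Lam.Aeq.symm_aux : ∀ n (M N : Lam A), M.size ≤ n → M.Aeq N → N.Aeq M := by
  intro n
  induction n with
  | zero => intro M N hs h; cases M <;> simp [Lam.size] at hs
  | succ n ih =>
      intro M N hs h
      cases h with
      | var => exact .var
      | @app M₁ M₁' N₁ N₁' h1 h2 =>
          simp only [Lam.size] at hs
          exact .app (ih _ _ (by omega) h1) (ih _ _ (by omega) h2)
      | @lam_same c M' N' h =>
          simp only [Lam.size] at hs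
          exact .lam_same (ih _ _ (by omega) h)
      | @lam_diff c d M' N' hf h =>
          simp only [Lam.size] at hs
          by_cases hcd : c = d
          · subst hcd
            rw [Lam.swap_self] at h
            exact .lam_same (ih _ _ (by omega) h)
          · -- need: Fresh d M' and Aeq N' (M'.swap d c)
            have h1 : (N'.swap c d).Aeq M' := ih _ _ (by omega) h
            have hdM : M'.Fresh d := by
              have : (N'.swap c d).Fresh d := by
                rw [Lam.fresh_swap_iff]
                simpa [swapName, (Ne.symm hcd : ¬ d = c)] using hf
              exact (h1.fresh_iff d).mp this
            refine .lam_diff hdM ?_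
            have h2 : N'.Aeq (M'.swap c d) := by
              have h2 := h1.swap c d
              rwa [Lam.swap_invol] at h2
            rwa [Lam.swap_comm] at h2

lemma Lam.Aeq.symm {M N : Lam A} (h : M.Aeq N) : N.Aeq M :=
  Lam.Aeq.symm_aux M.size M N le_rfl h

lemma Lam.Aeq.trans_aux : ∀ n (M N P : Lam A), M.size ≤ n →
    M.Aeq N → N.Aeq P → M.Aeq P := by
  intro n
  induction n with
  | zero => intro M N P hs h1 h2; cases M <;> simp [Lam.size] at hs
  | succ n ih =>
      intro M N P hs h1 h2
      cases h1 with
      | var => exact h2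
      | @app M₁ N₁ M₂ N₂ ha hb =>
          simp only [Lam.size] at hs
          cases h2 with
          | app hc hd =>
              exact .app (ih _ _ _ (by omega) ha hc) (ih _ _ _ (by omega) hb hd)
      | @lam_same c M' N' h =>
          simp only [Lam.size] at hs
          cases h2 with
          | lam_same h' => exact .lam_same (ih _ _ _ (by omega) h h')
          | @lam_diff _ e _ P' hf h' =>
              exact .lam_diff hf (ih _ _ _ (by omega) h h')
      | @lam_diff c d M' N' hf h =>
          simp only [Lam.size] at hs
          cases h2 with
          | @lam_same _ _ P' h' =>
              refine .lam_diff ((h'.fresh_iff c).mp hf) ?_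
              exact ih _ _ _ (by omega) h (h'.swap c d)
          | @lam_diff _ e _ P' hf' h' =>
              -- M' ~ N'.swap c d ; N' ~ P'.swap d e ; Fresh c N', Fresh d P'
              by_cases hcd : c = d
              · subst hcd
                rw [Lam.swap_self] at h
                exact .lam_diff hf' (ih _ _ _ (by omega) h h')
              by_cases hde : d = e
              · subst hde
                rw [Lam.swap_self] at h'
                refine .lam_diff ((h'.fresh_iff c).mp hf) ?_
                exact ih _ _ _ (by omega) h ((h'.swap c d))
              by_cases hce : c = e
              · subst hce
                -- goal: lam c M' ~ lam c P' via lam_same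
                have h2 : (N'.swap c d).Aeq ((P'.swap d c).swap c d) := h'.swap c d
                have : ((P'.swap d c).swap c d) = P' := by
                  rw [Lam.swap_comm d c, Lam.swap_invol]
                rw [this] at h2
                exact .lam_same (ih _ _ _ (by omega) h h2)
              · -- all distinct
                have hcP : P'.Fresh c := by
                  have : (P'.swap d e).Fresh c := (h'.fresh_iff c).mp hf
                  rw [Lam.fresh_swap_iff] at this
                  simpa [swapName, hcd, hce] using this
                refine .lam_diff hcP ?_
                have h2 : (N'.swap c d).Aeq ((P'.swap d e).swap c d) := h'.swap c d
                have h3 : M'.Aeq ((P'.swap d e).swap c d) :=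
                  ih _ _ _ (by omega) h h2
                have key : ((P'.swap d e).swap c d) = ((P'.swap c e).swap d e) := by
                  have := Lam.swap_swap d e c e P'
                  -- (P'.swap c e).swap d e = (P'.swap d e).swap (swapName d e c) (swapName d e e)
                  rw [this]
                  congr 1
                  · simp [swapName, hcd, hce]
                  · simp [swapName, (Ne.symm hde : ¬ e = d)]
                have h4 : ((P'.swap c e).swap d e).Aeq (P'.swap c e) := by
                  refine Lam.aeq_swap_of_fresh ?_ ?_
                  · rw [Lam.fresh_swap_iff]
                    simpa [swapName, (Ne.symm hcd : ¬ d = c), hde] using hf'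
                  · rw [Lam.fresh_swap_iff]
                    simpa [swapName, (Ne.symm hce : ¬ e = c)] using hcP
                rw [key] at h3
                exact ih _ _ _ (by omega) h3 h4
lemma Lam.Aeq.trans {M N P : Lam A} (h1 : M.Aeq N) (h2 : N.Aeq P) : M.Aeq P :=
  Lam.Aeq.trans_aux M.size M N P le_rfl h1 h2

inductive Lam.Subst : Lam A → Lam A → A → Lam A → Prop where
  | var_same {a : A} {N : Lam A} : Lam.Subst (.var a) N a N
  | var_diff {a b : A} {N : Lam A} : b ≠ a → Lam.Subst (.var b) N a (.var b)
  | app {a : A} {M₁ M₂ M₁' M₂' N : Lam A} :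
      Lam.Subst M₁ N a M₁' → Lam.Subst M₂ N a M₂' →
      Lam.Subst (.app M₁ M₂) N a (.app M₁' M₂')
  | lam {a b : A} {M M' N : Lam A} :
      b ≠ a → Lam.Fresh b N → Lam.Subst M N a M' →
      Lam.Subst (.lam b M) N a (.lam b M')

lemma Lam.Subst.swap {M N M' : Lam A} {a : A} (h : Lam.Subst M N a M') (x y : A) :
    Lam.Subst (M.swap x y) (N.swap x y) (swapName x y a) (M'.swap x y) := by
  induction h with
  | var_same => exact .var_same
  | var_diff hne => exact .var_diff fun h => hne (swapName_inj h)
  | app _ _ ih1 ih2 => exact .app ih1 ih2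
  | lam hne hf _ ih => exact .lam (fun h => hne (swapName_inj h)) (hf.swap) ih

lemma Lam.Subst.fresh_preserve {M N M' : Lam A} {a x : A}
    (h : Lam.Subst M N a M') (hxa : x ≠ a) (hM : M.Fresh x) (hN : N.Fresh x) :
    M'.Fresh x := by
  induction h with
  | var_same => exact hN
  | var_diff hne => exact hM
  | app _ _ ih1 ih2 =>
      rcases hM with _ | ⟨h1, h2⟩
      exact .app (ih1 hxa h1 hN) (ih2 hxa h2 hN)
  | @lam _ b _ _ _ hne hf _ ih =>
      by_cases hxb : x = b
      · exact hxb ▸ .lam_same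
      · rcases hM with _ | _ | ⟨_, hM'⟩ | _
        · exact .lam_neq hxb (ih hxa hM' hN)
        · exact absurd rfl hxb

/-- Functionality up to alpha, allowing the substituted term to vary up to alpha. -/
lemma Lam.Subst.functional_aux : ∀ n (M₁ N₁ M₁' M₂ N₂ M₂' : Lam A) (a : A),
    M₁.size ≤ n → Lam.Subst M₁ N₁ a M₁' → Lam.Subst M₂ N₂ a M₂' →
    M₁.Aeq M₂ → N₁.Aeq N₂ → M₁'.Aeq M₂' := by
  intro n
  induction n with
  | zero => intro M₁ _ _ _ _ _ _ hs _ _ _ _; cases M₁ <;> simp [Lam.size] at hs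
  | succ n ih =>
      intro M₁ N₁ M₁' M₂ N₂ M₂' a hs h1 h2 hM hN
      cases h1 with
      | var_same =>
          cases hM
          cases h2 with
          | var_same => exact hN
          | var_diff hne => exact absurd rfl hne
      | var_diff hne =>
          cases hM
          cases h2 with
          | var_same => exact absurd rfl hne
          | var_diff _ => exact .var
      | @app _ P₁ P₂ P₁' P₂' _ ha hb =>
          simp only [Lam.size] at hs
          cases hM with
          | app hM1 hM2 =>
              cases h2 with
              | app hc hd =>
                  exact .app (ih _ _ _ _ _ _ _ (by omega) ha hc hM1 hN)
                    (ih _ _ _ _ _ _ _ (by omega) hb hd hM2 hN)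
      | @lam _ b P P' _ hba hbN hsub =>
          simp only [Lam.size] at hs
          cases hM with
          | lam_same hPQ =>
              cases h2 with
              | lam hca hcN hsub' =>
                  exact .lam_same (ih _ _ _ _ _ _ _ (by omega) hsub hsub' hPQ hN)
          | @lam_diff _ c _ Q hfbQ hPQ =>
              cases h2 with
              | @lam _ _ _ Q' _ hca hcN hsub' =>
                  -- hPQ : P.Aeq (Q.swap b c)
                  refine .lam_diff ?_ ?_
                  · -- Fresh b Q'
                    exact hsub'.fresh_preserve hba hfbQ
                      ((hN.fresh_iff b).mp hbN)
                  · -- P'.Aeq (Q'.swap b c)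
                    have hs' := hsub'.swap b c
                    have hsn : swapName b c a = a := by
                      simp [swapName, (Ne.symm hba : ¬ a = b), (Ne.symm hca : ¬ a = c)]
                    rw [hsn] at hs'
                    refine ih _ _ _ _ _ _ _ (by omega) hsub hs' hPQ ?_
                    refine hN.trans (Lam.Aeq.symm ?_)
                    exact Lam.aeq_swap_of_fresh ((hN.fresh_iff b).mp hbN) hcN

/-- The finite set of all names occurring in a term. -/
def Lam.names : Lam A → Finset A
  | .var a => {a}
  | .app M N => M.names ∪ N.names
  | .lam a M => insert a M.names

lemma Lam.fresh_of_notMem_names {x : A} {M : Lam A} (h : x ∉ M.names) :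
    M.Fresh x := by
  induction M with
  | var a => exact .var (by simpa [Lam.names] using h)
  | app M N ih1 ih2 =>
      simp only [Lam.names, Finset.mem_union] at h
      exact .app (ih1 fun hx => h (Or.inl hx)) (ih2 fun hx => h (Or.inr hx))
  | lam a M ih =>
      simp only [Lam.names, Finset.mem_insert] at h
      push_neg at h
      exact .lam_neq h.1 (ih h.2)

lemma Lam.subst_total [Infinite A] : ∀ n (M N : Lam A) (a : A), M.size ≤ n →
    ∃ M₀ M' : Lam A, M₀.Aeq M ∧ Lam.Subst M₀ N a M' := by
  intro n
  induction n with
  | zero => intro M _ _ hs; cases M <;> simp [Lam.size] at hs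
  | succ n ih =>
      intro M N a hs
      cases M with
      | var b =>
          by_cases hba : b = a
          · subst hba; exact ⟨.var b, N, .refl _, .var_same⟩
          · exact ⟨.var b, .var b, .refl _, .var_diff hba⟩
      | app P Q =>
          simp only [Lam.size] at hs
          obtain ⟨P₀, P', hP, hsP⟩ := ih P N a (by omega)
          obtain ⟨Q₀, Q', hQ, hsQ⟩ := ih Q N a (by omega)
          exact ⟨.app P₀ Q₀, .app P' Q', .app hP hQ, .app hsP hsQ⟩
      | lam b P =>
          simp only [Lam.size] at hs
          obtain ⟨c, hc⟩ := Infinite.exists_notMem_finset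
            (insert a (insert b (N.names ∪ P.names)))
          simp only [Finset.mem_insert, Finset.mem_union] at hc
          push_neg at hc
          obtain ⟨hca, hcb, hcN, hcP⟩ := hc
          obtain ⟨Q₀, Q', hQ, hsQ⟩ := ih (P.swap b c) N a
            (by rw [Lam.size_swap]; omega)
          refine ⟨.lam c Q₀, .lam c Q', ?_, .lam hca (Lam.fresh_of_notMem_names hcN) hsQ⟩
          refine .lam_diff (Lam.fresh_of_notMem_names hcP) ?_
          rwa [Lam.swap_comm c b]

/-- The substitution relation is total and functional up to alpha-equivalence. -/
theorem subst_total_functional [Countable A] [Infinite A]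
    (M N : Lam A) (a : A) :
    (∃ M₀ M' : Lam A, M₀.Aeq M ∧ Lam.Subst M₀ N a M') ∧
    (∀ M₁ M₂ M₁' M₂' : Lam A, M₁.Aeq M → M₂.Aeq M →
      Lam.Subst M₁ N a M₁' → Lam.Subst M₂ N a M₂' → M₁'.Aeq M₂') := by
  constructor
  · exact Lam.subst_total M.size M N a le_rfl
  · intro M₁ M₂ M₁' M₂' h1 h2 hs1 hs2
    exact Lam.Subst.functional_aux M₁.size M₁ N M₁' M₂ N M₂' a le_rfl hs1 hs2
      (h1.trans h2.symm) (.refl N)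
end
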